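/- Suppose S(t) = Σ_{j=1}^n a_j sin(jt) satisfies S(t_1) = 0 for some t_1 ∈ (0,π), and write S(t) = (cos t - cos t_1) · Σ_{j=1}^{n-1} b_j sin(jt) with the unique coefficients b_j. Then C(t_1) = Σ_{j=1}^n a_j cos(jt_1) = -b_1/2. -/

import Mathlib

/-!
Integrating the identity against `sin (m t)` over `[0, π]` and using orthogonality identifies the
coefficients: with `b` extended by zero, `a m = (b (m + 1) + b (m - 1)) / 2 - cos t₁ * b m`.
Substituted into `∑ a m cos (m t₁)`, the formula
`cos ((m + 1) t₁) + cos ((m - 1) t₁) = 2 cos t₁ cos (m t₁)` makes the sum telescope; only the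
boundary term `b 1 * cos (0 * t₁) / 2` survives.
-/

open Real Finset intervalIntegral

lemma integral_cos_int_mul (c : ℤ) :
    ∫ x in (0 : ℝ)..π, cos (c * x) = if c = 0 then π else 0 := by
  split_ifs with hc
  · simp [hc]
  · rw [integral_comp_mul_left (fun x => cos x) (Int.cast_ne_zero.mpr hc), integral_cos,
      sin_int_mul_pi]
    simp

lemma integral_sin_nat_mul_mul_sin_nat_mul (k m : ℕ) :
    ∫ x in (0 : ℝ)..π, sin (k * x) * sin (m * x) = if k = m ∧ m ≠ 0 then π / 2 else 0 := by
  have product_to_sum : ∀ x : ℝ, sin (k * x) * sin (m * x) =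
      (cos (((k - m : ℤ) : ℝ) * x) - cos (((k + m : ℤ) : ℝ) * x)) / 2 := by
    intro x
    push_cast
    rw [sub_mul, add_mul, cos_sub, cos_add]
    ring
  simp_rw [product_to_sum]
  rw [integral_div, integral_sub (Continuous.intervalIntegrable (by fun_prop) _ _)
    (Continuous.intervalIntegrable (by fun_prop) _ _), integral_cos_int_mul, integral_cos_int_mul]
  by_cases hkm : k = m
  · subst hkm
    by_cases hk : k = 0 <;> simp [hk]
  · have h1 : (k : ℤ) - m ≠ 0 := by omega
    have h2 : (k : ℤ) + m ≠ 0 := by omega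
    simp [hkm, h1, h2]

lemma integral_sum_sin_mul_sin {s : Finset ℕ} (hs : 0 ∉ s) (c : ℕ → ℝ) (k : ℕ) :
    ∫ x in (0 : ℝ)..π, (∑ j ∈ s, c j * sin (j * x)) * sin (k * x) =
      π / 2 * (s : Set ℕ).indicator c k := by
  simp_rw [sum_mul, mul_assoc]
  rw [integral_finsetSum fun j _ => Continuous.intervalIntegrable (by fun_prop) _ _]
  simp_rw [integral_const_mul, integral_sin_nat_mul_mul_sin_nat_mul]
  by_cases hk : k ∈ s
  · rw [sum_eq_single_of_mem k hk fun j _ hjk => by simp [hjk]]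
    simp [hk, ne_of_mem_of_not_mem hk hs, mul_comm]
  · rw [sum_eq_zero fun j hj => by simp [ne_of_mem_of_not_mem hj hk]]
    simp [hk]

lemma cos_sub_mul_sin_nat_mul (r x : ℝ) {m : ℕ} (hm : 1 ≤ m) :
    (cos x - r) * sin (m * x) =
      (sin ((m + 1 : ℕ) * x) + sin ((m - 1 : ℕ) * x)) / 2 - r * sin (m * x) := by
  rw [Nat.cast_sub hm]
  push_cast
  rw [add_mul, sub_mul (m : ℝ), one_mul, sin_add, sin_sub]
  ring

lemma integral_cos_sub_mul_mul_sin_nat_mul {f : ℝ → ℝ} (hf : Continuous f) (r : ℝ) {m : ℕ}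
    (hm : 1 ≤ m) :
    ∫ x in (0 : ℝ)..π, (cos x - r) * f x * sin (m * x) =
      ((∫ x in (0 : ℝ)..π, f x * sin ((m + 1 : ℕ) * x)) +
          ∫ x in (0 : ℝ)..π, f x * sin ((m - 1 : ℕ) * x)) / 2 -
        r * ∫ x in (0 : ℝ)..π, f x * sin (m * x) := by
  have expand : ∀ x, (cos x - r) * f x * sin (m * x) =
      (f x * sin ((m + 1 : ℕ) * x) + f x * sin ((m - 1 : ℕ) * x)) / 2 -
        r * (f x * sin (m * x)) := by
    intro x
    rw [mul_comm _ (f x), mul_assoc, cos_sub_mul_sin_nat_mul r x hm]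
    ring
  simp_rw [expand]
  rw [integral_sub (Continuous.intervalIntegrable (by fun_prop) _ _)
    (Continuous.intervalIntegrable (by fun_prop) _ _), integral_div,
    integral_add (Continuous.intervalIntegrable (by fun_prop) _ _)
    (Continuous.intervalIntegrable (by fun_prop) _ _), integral_const_mul]

lemma indicator_eq_of_sum_sin_eq_cos_sub_mul {s s' : Finset ℕ} (hs : 0 ∉ s) (hs' : 0 ∉ s')
    {a b : ℕ → ℝ} {r : ℝ}
    (h : ∀ x, ∑ j ∈ s, a j * sin (j * x) = (cos x - r) * ∑ j ∈ s', b j * sin (j * x))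
    {m : ℕ} (hm : 1 ≤ m) :
    (s : Set ℕ).indicator a m =
      ((s' : Set ℕ).indicator b (m + 1) + (s' : Set ℕ).indicator b (m - 1)) / 2 -
        r * (s' : Set ℕ).indicator b m := by
  have := integral_sum_sin_mul_sin hs a m
  simp_rw [h] at this
  rw [integral_cos_sub_mul_mul_sin_nat_mul (f := fun x => ∑ j ∈ s', b j * sin (j * x))
    (by fun_prop) r hm] at this
  simp only [integral_sum_sin_mul_sin hs'] at this
  refine mul_left_cancel₀ (by positivity : π / 2 ≠ 0) (this.symm.trans ?_)
  ring

lemma sum_Icc_cos_telescope (β : ℕ → ℝ) (θ : ℝ) {N : ℕ} (hN : 1 ≤ N) (hβ0 : β 0 = 0)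
    (hβN : β N = 0) (hβN1 : β (N + 1) = 0) :
    ∑ m ∈ Icc 1 N, ((β (m + 1) + β (m - 1)) / 2 - cos θ * β m) * cos (m * θ) = -β 1 / 2 := by
  set V := fun m : ℕ => β m * cos ((m - 1 : ℕ) * θ) - β (m - 1) * cos (m * θ)
  have step : ∀ m ∈ Icc 1 N,
      ((β (m + 1) + β (m - 1)) / 2 - cos θ * β m) * cos (m * θ) = (V (m + 1) - V m) / 2 := by
    intro m hm
    have hm1 : 1 ≤ m := (mem_Icc.mp hm).1
    have sum_to_product : cos ((m + 1 : ℕ) * θ) + cos ((m - 1 : ℕ) * θ) =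
        2 * cos θ * cos (m * θ) := by
      rw [Nat.cast_sub hm1]
      push_cast
      rw [add_mul, sub_mul (m : ℝ), one_mul, cos_add, cos_sub]
      ring
    simp only [V, Nat.add_sub_cancel]
    linear_combination (β m / 2) * sum_to_product
  rw [sum_congr rfl step, ← sum_div, sum_Icc_sub hN]
  simp [V, hβ0, hβN, hβN1]

theorem stmt_4_general (n : ℕ) (hn : 2 ≤ n) (a b : ℕ → ℝ) (t₁ : ℝ)
    (hrep : ∀ t : ℝ, ∑ j ∈ Finset.Icc 1 n, a j * Real.sin (j * t) =
      (Real.cos t - Real.cos t₁) *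
        ∑ j ∈ Finset.Icc 1 (n - 1), b j * Real.sin (j * t)) :
    ∑ j ∈ Finset.Icc 1 n, a j * Real.cos (j * t₁) = -b 1 / 2 := by
  set β := ((Icc 1 (n - 1) : Finset ℕ) : Set ℕ).indicator b
  have coeff : ∀ m ∈ Icc 1 n, a m = (β (m + 1) + β (m - 1)) / 2 - cos t₁ * β m := by
    intro m hm
    rw [← indicator_eq_of_sum_sin_eq_cos_sub_mul (by simp) (by simp) hrep (mem_Icc.mp hm).1,
      Set.indicator_of_mem (by simpa using hm)]
  have hβ : ∀ k, k = 0 ∨ n ≤ k → β k = 0 := fun k hk =>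
    Set.indicator_of_notMem (by simp only [coe_Icc, Set.mem_Icc]; omega) b
  rw [sum_congr rfl fun m hm => by rw [coeff m hm],
    sum_Icc_cos_telescope β t₁ (by omega) (hβ 0 (by simp)) (hβ n (by simp))
      (hβ (n + 1) (by simp)),
    show β 1 = b 1 from Set.indicator_of_mem (by simp only [coe_Icc, Set.mem_Icc]; omega) b]

theorem stmt_4 (n : ℕ) (hn : 2 ≤ n) (a b : ℕ → ℝ) (t₁ : ℝ)
    (ht₁ : t₁ ∈ Set.Ioo 0 Real.pi)
    (hS : ∑ j ∈ Finset.Icc 1 n, a j * Real.sin (j * t₁) = 0)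
    (hrep : ∀ t : ℝ, ∑ j ∈ Finset.Icc 1 n, a j * Real.sin (j * t) =
      (Real.cos t - Real.cos t₁) *
        ∑ j ∈ Finset.Icc 1 (n - 1), b j * Real.sin (j * t)) :
    ∑ j ∈ Finset.Icc 1 n, a j * Real.cos (j * t₁) = -b 1 / 2 :=
  stmt_4_general n hn a b t₁ hrep
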